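/- arXiv:1308.0451 — 3 statements merged into one kernel-verified Lean document; each statement's English description precedes it below -/
import Mathlib

section
/- Let f be bounded on [0,1] and let x \in [0,1] be a point at which f''(x) exists. Then \lim_{n\to\infty} 2n (B_n(f;x) - f(x)) = x(1-x) f''(x). -/
/-!
Write `f(t) = f(x) + f'(x)(t - x) + f''(x)/2 (t - x)² + R(t)` with `R(t) = o((t - x)²)` (Peano form
of Taylor's theorem, obtained from l'Hôpital's rule). The Bernstein operator reproduces the
quadratic part exactly up to the variance term `x(1 - x)/n`, so it remains to show
`n Bₙ(R; x) → 0`. Near `x` one has `|R(t)| ≤ ε (t - x)²`, and far from `x` the boundedness of `f`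
gives `|R(t)| ≤ K (t - x)⁴`; the second and fourth central moments of the binomial weights,
`x(1 - x)/n` and `O(1/n²)`, then bound `n |Bₙ(R; x)|` by `ε/4 + K/n`.
-/

open Finset Filter Topology Asymptotics

/-- The `n`-th Bernstein polynomial of `f`. -/
noncomputable def bern (n : ℕ) (f : ℝ → ℝ) (x : ℝ) : ℝ :=
  ∑ i ∈ Finset.range (n + 1),
    (n.choose i : ℝ) * f ((i : ℝ) / n) * x ^ i * (1 - x) ^ (n - i)

theorem Nat.cast_descFactorial_succ {R : Type*} [Ring R] (i k : ℕ) :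
    ((i.descFactorial (k + 1) : ℕ) : R) = ((i : R) - k) * i.descFactorial k := by
  rcases lt_or_ge i k with hik | hki
  · simp [Nat.descFactorial_eq_zero_iff_lt.mpr hik]
  · rw [Nat.descFactorial_succ, Nat.cast_mul, Nat.cast_sub hki]

noncomputable def bernsteinWeight (n i : ℕ) (x : ℝ) : ℝ :=
  n.choose i * x ^ i * (1 - x) ^ (n - i)

namespace bernsteinWeight

theorem nonneg {x : ℝ} (hx : x ∈ Set.Icc (0 : ℝ) 1) (n i : ℕ) : 0 ≤ bernsteinWeight n i x := by
  have hx₀ : 0 ≤ x := hx.1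
  have hx₁ : 0 ≤ 1 - x := sub_nonneg.mpr hx.2
  unfold bernsteinWeight
  positivity

theorem add_one_mul_succ_succ (m j : ℕ) (x : ℝ) :
    (j + 1 : ℝ) * bernsteinWeight (m + 1) (j + 1) x = (m + 1) * x * bernsteinWeight m j x := by
  have hchoose : ((m + 1).choose (j + 1) : ℝ) * (j + 1) = (m + 1) * m.choose j := by
    exact_mod_cast (Nat.add_one_mul_choose_eq m j).symm
  simp only [bernsteinWeight, Nat.add_sub_add_right]
  linear_combination x ^ (j + 1) * (1 - x) ^ (m - j) * hchoose

theorem sum_descFactorial_mul (x : ℝ) (k n : ℕ) :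
    ∑ i ∈ range (n + 1), (i.descFactorial k : ℝ) * bernsteinWeight n i x
      = n.descFactorial k * x ^ k := by
  induction k generalizing n with
  | zero =>
    calc ∑ i ∈ range (n + 1), ((i.descFactorial 0 : ℕ) : ℝ) * bernsteinWeight n i x
        = (x + (1 - x)) ^ n := by
          rw [add_pow]
          refine sum_congr rfl fun i _ => ?_
          simp only [bernsteinWeight, Nat.descFactorial_zero, Nat.cast_one]
          ring
      _ = _ := by simp
  | succ k ih =>
    cases n with
    | zero => simp [bernsteinWeight]
    | succ m =>
      have hterm : ∀ j ∈ range (m + 1),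
          (((j + 1).descFactorial (k + 1) : ℕ) : ℝ) * bernsteinWeight (m + 1) (j + 1) x
            = (m + 1) * x * ((j.descFactorial k : ℝ) * bernsteinWeight m j x) := by
        intro j _
        rw [Nat.succ_descFactorial_succ]
        push_cast
        linear_combination (j.descFactorial k : ℝ) * add_one_mul_succ_succ m j x
      rw [sum_range_succ', sum_congr rfl hterm, ← mul_sum, ih, Nat.succ_descFactorial_succ,
        Nat.zero_descFactorial_succ]
      push_cast
      ring

theorem sum_eq_one (n : ℕ) (x : ℝ) : ∑ i ∈ range (n + 1), bernsteinWeight n i x = 1 := by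
  simpa using sum_descFactorial_mul x 0 n

theorem sum_sub_mul_eq_zero (n : ℕ) (x : ℝ) :
    ∑ i ∈ range (n + 1), ((i : ℝ) - n * x) * bernsteinWeight n i x = 0 := by
  have hexp : ∀ i ∈ range (n + 1), ((i : ℝ) - n * x) * bernsteinWeight n i x
      = (i.descFactorial 1 : ℝ) * bernsteinWeight n i x
        - n * x * ((i.descFactorial 0 : ℝ) * bernsteinWeight n i x) := by
    intro i _
    simp only [Nat.cast_descFactorial_succ, Nat.descFactorial_zero]
    ring
  rw [sum_congr rfl hexp, sum_sub_distrib, ← mul_sum, sum_descFactorial_mul,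
    sum_descFactorial_mul]
  simp

theorem sum_sub_sq_mul (n : ℕ) (x : ℝ) :
    ∑ i ∈ range (n + 1), ((i : ℝ) - n * x) ^ 2 * bernsteinWeight n i x = n * x * (1 - x) := by
  have hexp : ∀ i ∈ range (n + 1), ((i : ℝ) - n * x) ^ 2 * bernsteinWeight n i x
      = (i.descFactorial 2 : ℝ) * bernsteinWeight n i x
        + (1 - 2 * n * x) * ((i.descFactorial 1 : ℝ) * bernsteinWeight n i x)
        + (n * x) ^ 2 * ((i.descFactorial 0 : ℝ) * bernsteinWeight n i x) := by
    intro i _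
    simp only [Nat.cast_descFactorial_succ, Nat.descFactorial_zero]
    push_cast
    ring
  simp only [sum_congr rfl hexp, sum_add_distrib, ← mul_sum, sum_descFactorial_mul]
  simp only [Nat.cast_descFactorial_succ, Nat.descFactorial_zero]
  push_cast
  ring

theorem sum_sub_pow_four_mul (n : ℕ) (x : ℝ) :
    ∑ i ∈ range (n + 1), ((i : ℝ) - n * x) ^ 4 * bernsteinWeight n i x
      = n * x * (1 - x) + 3 * n * (n - 2) * x ^ 2 * (1 - x) ^ 2 := by
  have hexp : ∀ i ∈ range (n + 1), ((i : ℝ) - n * x) ^ 4 * bernsteinWeight n i x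
      = (i.descFactorial 4 : ℝ) * bernsteinWeight n i x
        + (6 - 4 * n * x) * ((i.descFactorial 3 : ℝ) * bernsteinWeight n i x)
        + (7 - 12 * n * x + 6 * (n * x) ^ 2) * ((i.descFactorial 2 : ℝ) * bernsteinWeight n i x)
        + (1 - 4 * n * x + 6 * (n * x) ^ 2 - 4 * (n * x) ^ 3)
          * ((i.descFactorial 1 : ℝ) * bernsteinWeight n i x)
        + (n * x) ^ 4 * ((i.descFactorial 0 : ℝ) * bernsteinWeight n i x) := by
    intro i _
    simp only [Nat.cast_descFactorial_succ, Nat.descFactorial_zero]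
    push_cast
    ring
  simp only [sum_congr rfl hexp, sum_add_distrib, ← mul_sum, sum_descFactorial_mul]
  simp only [Nat.cast_descFactorial_succ, Nat.descFactorial_zero]
  push_cast
  ring

theorem sum_div_sub_pow_mul {n : ℕ} (hn : n ≠ 0) (x : ℝ) (k : ℕ) :
    ∑ i ∈ range (n + 1), ((i : ℝ) / n - x) ^ k * bernsteinWeight n i x
      = (∑ i ∈ range (n + 1), ((i : ℝ) - n * x) ^ k * bernsteinWeight n i x) / n ^ k := by
  rw [sum_div]
  refine sum_congr rfl fun i _ => ?_
  have hn' : (n : ℝ) ≠ 0 := Nat.cast_ne_zero.mpr hn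
  rw [show (i : ℝ) / n - x = (i - n * x) / n by field_simp, div_pow, div_mul_eq_mul_div]

theorem sum_div_sub_sq_mul {n : ℕ} (hn : n ≠ 0) (x : ℝ) :
    ∑ i ∈ range (n + 1), ((i : ℝ) / n - x) ^ 2 * bernsteinWeight n i x = x * (1 - x) / n := by
  have hn' : (n : ℝ) ≠ 0 := Nat.cast_ne_zero.mpr hn
  rw [sum_div_sub_pow_mul hn, sum_sub_sq_mul]
  field_simp

theorem sum_div_sub_pow_four_mul_le {n : ℕ} (hn : n ≠ 0) {x : ℝ} (hx : x ∈ Set.Icc (0 : ℝ) 1) :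
    ∑ i ∈ range (n + 1), ((i : ℝ) / n - x) ^ 4 * bernsteinWeight n i x ≤ 1 / n ^ 2 := by
  have hn1 : (1 : ℝ) ≤ n := Nat.one_le_cast.mpr (Nat.one_le_iff_ne_zero.mpr hn)
  have hu0 : 0 ≤ x * (1 - x) := mul_nonneg hx.1 (sub_nonneg.mpr hx.2)
  have hu : x * (1 - x) ≤ 1 / 4 := by nlinarith [sq_nonneg (x - 1 / 2)]
  have hnum : n * x * (1 - x) + 3 * n * (n - 2) * x ^ 2 * (1 - x) ^ 2 ≤ (n : ℝ) ^ 2 := by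
    have hu2 : (x * (1 - x)) ^ 2 ≤ (1 / 4) ^ 2 := pow_le_pow_left₀ hu0 hu 2
    nlinarith [mul_nonneg (by linarith : (0 : ℝ) ≤ n) (sq_nonneg (x * (1 - x)))]
  rw [sum_div_sub_pow_mul hn, sum_sub_pow_four_mul,
    div_le_div_iff₀ (by positivity) (by positivity)]
  nlinarith [pow_pos (by linarith : (0 : ℝ) < n) 2]

theorem sum_quadratic_mul {n : ℕ} (hn : n ≠ 0) (a b c x : ℝ) :
    ∑ i ∈ range (n + 1), (a + b * ((i : ℝ) / n - x) + c * ((i : ℝ) / n - x) ^ 2)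
        * bernsteinWeight n i x = a + c * (x * (1 - x) / n) := by
  have hfirst := sum_div_sub_pow_mul hn x 1
  simp only [pow_one, sum_sub_mul_eq_zero, zero_div] at hfirst
  simp only [add_mul, mul_assoc, sum_add_distrib, ← mul_sum, hfirst, sum_eq_one,
    sum_div_sub_sq_mul hn]
  ring

end bernsteinWeight

theorem bern_eq_sum_mul_bernsteinWeight (n : ℕ) (f : ℝ → ℝ) (x : ℝ) :
    bern n f x = ∑ i ∈ range (n + 1), f (i / n) * bernsteinWeight n i x :=
  sum_congr rfl fun i _ => by unfold bernsteinWeight; ring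

theorem isLittleO_taylor_two {f : ℝ → ℝ} {x d : ℝ}
    (hf : ∀ᶠ y in 𝓝 x, DifferentiableAt ℝ f y) (hf' : HasDerivAt (deriv f) d x) :
    (fun t => f t - f x - deriv f x * (t - x) - d / 2 * (t - x) ^ 2) =o[𝓝 x]
      fun t => (t - x) ^ 2 := by
  have hderiv : ∀ᶠ t in 𝓝[≠] x, HasDerivAt
      (fun t => f t - f x - deriv f x * (t - x) - d / 2 * (t - x) ^ 2)
      (deriv f t - deriv f x - d * (t - x)) t := by
    filter_upwards [nhdsWithin_le_nhds hf] with t ht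
    have hquad : HasDerivAt (fun t => d / 2 * (t - x) ^ 2) (d / 2 * (2 * (t - x))) t := by
      simpa using (((hasDerivAt_id' t).sub_const x).fun_pow 2).const_mul (d / 2)
    exact (((ht.hasDerivAt.sub_const (f x)).fun_sub
      (((hasDerivAt_id' t).sub_const x).const_mul (deriv f x))).fun_sub hquad).congr_deriv
        (by ring)
  have hquot : Tendsto (fun t => (f t - f x - deriv f x * (t - x) - d / 2 * (t - x) ^ 2)
      / (t - x) ^ 2) (𝓝[≠] x) (𝓝 0) := by
    refine HasDerivAt.lhopital_zero_nhdsNE hderiv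
      (g' := fun t => 2 * (t - x)) ?_ ?_ ?_ ?_ ?_
    · exact Eventually.of_forall fun t => by
        simpa using ((hasDerivAt_id' t).sub_const x).fun_pow 2
    · filter_upwards [self_mem_nhdsWithin] with t (ht : t ≠ x)
      simpa [sub_eq_zero] using ht
    · refine tendsto_nhdsWithin_of_tendsto_nhds ?_
      have hc : ContinuousAt f x := hf.self_of_nhds.continuousAt
      have hrem : ContinuousAt
          (fun t => f t - f x - deriv f x * (t - x) - d / 2 * (t - x) ^ 2) x := by
        fun_prop
      simpa using hrem.tendsto
    · refine tendsto_nhdsWithin_of_tendsto_nhds ?_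
      have hsq : ContinuousAt (fun t : ℝ => (t - x) ^ 2) x := by fun_prop
      simpa using hsq.tendsto
    · have hslope := (hasDerivAt_iff_tendsto_slope.mp hf').sub_const d |>.div_const 2
      rw [sub_self, zero_div] at hslope
      refine hslope.congr' ?_
      filter_upwards [self_mem_nhdsWithin] with t (ht : t ≠ x)
      rw [slope_def_field]
      field_simp [sub_ne_zero.mpr ht]
  rw [← nhdsNE_sup_pure x]
  refine ((isLittleO_iff_tendsto' ?_).mpr hquot).sup ?_
  · exact Eventually.of_forall fun t ht => by simp_all [sub_eq_zero]
  · exact isLittleO_pure.mpr (by simp)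

theorem exists_abs_le_sq_add_pow_four_of_isLittleO {R : ℝ → ℝ} {s : Set ℝ} {x C ε : ℝ}
    (hC : ∀ t ∈ s, |R t| ≤ C) (hR : R =o[𝓝 x] fun t => (t - x) ^ 2) (hε : 0 < ε) :
    ∃ K, 0 ≤ K ∧ ∀ t ∈ s, |R t| ≤ ε * (t - x) ^ 2 + K * (t - x) ^ 4 := by
  obtain ⟨δ, hδ, hnear⟩ := Metric.eventually_nhds_iff.mp (hR.def hε)
  refine ⟨|C| / δ ^ 4, by positivity, fun t ht => ?_⟩
  have hsq : 0 ≤ ε * (t - x) ^ 2 := by positivity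
  have hK : 0 ≤ |C| / δ ^ 4 * (t - x) ^ 4 := by positivity
  rcases lt_or_ge (dist t x) δ with hclose | hfar
  · have hsmall := hnear hclose
    simp only [Real.norm_eq_abs, abs_pow, sq_abs] at hsmall
    linarith
  · have hδt : δ ^ 4 ≤ (t - x) ^ 4 := by
      rw [Real.dist_eq] at hfar
      simpa [pow_abs, abs_of_nonneg (by positivity : (0 : ℝ) ≤ (t - x) ^ 4)] using
        pow_le_pow_left₀ hδ.le hfar 4
    have hCK : |C| ≤ |C| / δ ^ 4 * (t - x) ^ 4 := by
      rw [div_mul_eq_mul_div, le_div_iff₀ (by positivity)]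
      exact mul_le_mul_of_nonneg_left hδt (abs_nonneg C)
    linarith [hC t ht, le_abs_self C]

theorem abs_mul_sum_mul_bernsteinWeight_le {R : ℝ → ℝ} {x ε K : ℝ} (hx : x ∈ Set.Icc (0 : ℝ) 1)
    (hK : 0 ≤ K) (hR : ∀ t ∈ Set.Icc (0 : ℝ) 1, |R t| ≤ ε * (t - x) ^ 2 + K * (t - x) ^ 4)
    {n : ℕ} (hn : n ≠ 0) :
    |n * ∑ i ∈ range (n + 1), R (i / n) * bernsteinWeight n i x| ≤ ε * (x * (1 - x)) + K / n := by
  have hn' : (0 : ℝ) < n := Nat.cast_pos.mpr (Nat.pos_of_ne_zero hn)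
  have hnode : ∀ i ∈ range (n + 1), (i : ℝ) / n ∈ Set.Icc (0 : ℝ) 1 := fun i hi =>
    ⟨by positivity, div_le_one_of_le₀ (by exact_mod_cast Nat.lt_succ_iff.mp (mem_range.mp hi))
      hn'.le⟩
  have hsum : |∑ i ∈ range (n + 1), R (i / n) * bernsteinWeight n i x|
      ≤ ε * (x * (1 - x) / n) + K * (1 / n ^ 2) := calc
    _ ≤ ∑ i ∈ range (n + 1), |R (i / n)| * bernsteinWeight n i x := by
      refine (abs_sum_le_sum_abs _ _).trans_eq (sum_congr rfl fun i _ => ?_)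
      rw [abs_mul, abs_of_nonneg (bernsteinWeight.nonneg hx n i)]
    _ ≤ ∑ i ∈ range (n + 1),
          (ε * ((i : ℝ) / n - x) ^ 2 + K * ((i : ℝ) / n - x) ^ 4) * bernsteinWeight n i x :=
      sum_le_sum fun i hi =>
        mul_le_mul_of_nonneg_right (hR _ (hnode i hi)) (bernsteinWeight.nonneg hx n i)
    _ = ε * (x * (1 - x) / n)
          + K * ∑ i ∈ range (n + 1), ((i : ℝ) / n - x) ^ 4 * bernsteinWeight n i x := by
      simp only [add_mul, sum_add_distrib, mul_assoc, ← mul_sum,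
        bernsteinWeight.sum_div_sub_sq_mul hn]
    _ ≤ ε * (x * (1 - x) / n) + K * (1 / n ^ 2) := by
      gcongr
      exact bernsteinWeight.sum_div_sub_pow_four_mul_le hn hx
  calc _ = n * |∑ i ∈ range (n + 1), R (i / n) * bernsteinWeight n i x| := by
        rw [abs_mul, abs_of_pos hn']
    _ ≤ n * (ε * (x * (1 - x) / n) + K * (1 / n ^ 2)) := by gcongr
    _ = ε * (x * (1 - x)) + K / n := by field_simp

theorem tendsto_mul_sum_mul_bernsteinWeight_of_isLittleO {R : ℝ → ℝ} {x C : ℝ}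
    (hx : x ∈ Set.Icc (0 : ℝ) 1) (hC : ∀ t ∈ Set.Icc (0 : ℝ) 1, |R t| ≤ C)
    (hR : R =o[𝓝 x] fun t => (t - x) ^ 2) :
    Tendsto (fun n : ℕ => n * ∑ i ∈ range (n + 1), R (i / n) * bernsteinWeight n i x)
      atTop (𝓝 0) := by
  rw [Metric.tendsto_nhds]
  intro ε hε
  obtain ⟨K, hK, hRK⟩ := exists_abs_le_sq_add_pow_four_of_isLittleO hC hR (half_pos hε)
  have hu : x * (1 - x) ≤ 1 / 4 := by nlinarith [sq_nonneg (x - 1 / 2)]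
  have htail : ∀ᶠ n : ℕ in atTop, K / n < ε / 2 :=
    (tendsto_const_div_atTop_nhds_zero_nat K).eventually (gt_mem_nhds (half_pos hε))
  filter_upwards [htail, eventually_ne_atTop 0] with n hKn hn
  rw [Real.dist_eq, sub_zero]
  calc _ ≤ ε / 2 * (x * (1 - x)) + K / n := abs_mul_sum_mul_bernsteinWeight_le hx hK hRK hn
    _ < ε := by nlinarith

theorem abs_sub_taylor_two_le {f : ℝ → ℝ} {M x t c q : ℝ}
    (hf : ∀ t ∈ Set.Icc (0 : ℝ) 1, |f t| ≤ M) (hx : x ∈ Set.Icc (0 : ℝ) 1)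
    (ht : t ∈ Set.Icc (0 : ℝ) 1) :
    |f t - f x - c * (t - x) - q * (t - x) ^ 2| ≤ 2 * M + |c| + |q| := by
  have hdist : |t - x| ≤ 1 :=
    abs_sub_le_iff.mpr ⟨by linarith [ht.2, hx.1], by linarith [ht.1, hx.2]⟩
  have hlin : |c * (t - x)| ≤ |c| := by
    rw [abs_mul]; exact mul_le_of_le_one_right (abs_nonneg c) hdist
  have hquad : |q * (t - x) ^ 2| ≤ |q| := by
    rw [abs_mul, abs_pow]
    exact mul_le_of_le_one_right (abs_nonneg q) (pow_le_one₀ (abs_nonneg _) hdist)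
  linarith [abs_sub (f t - f x - c * (t - x)) (q * (t - x) ^ 2),
    abs_sub (f t - f x) (c * (t - x)), abs_sub (f t) (f x), hf t ht, hf x hx]

theorem bern_sub_eq_sum_sub_taylor_two {n : ℕ} (hn : n ≠ 0) (f : ℝ → ℝ) (x c q : ℝ) :
    bern n f x - f x = q * (x * (1 - x) / n) + ∑ i ∈ range (n + 1),
      (f (i / n) - f x - c * ((i : ℝ) / n - x) - q * ((i : ℝ) / n - x) ^ 2)
        * bernsteinWeight n i x := by
  have hexpand : ∀ i ∈ range (n + 1), f (i / n) * bernsteinWeight n i x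
      = (f x + c * ((i : ℝ) / n - x) + q * ((i : ℝ) / n - x) ^ 2) * bernsteinWeight n i x
        + (f (i / n) - f x - c * ((i : ℝ) / n - x) - q * ((i : ℝ) / n - x) ^ 2)
          * bernsteinWeight n i x := fun i _ => by ring
  rw [bern_eq_sum_mul_bernsteinWeight, sum_congr rfl hexpand, sum_add_distrib,
    bernsteinWeight.sum_quadratic_mul hn]
  ring

/-- Voronovskaya's theorem: if `f` is bounded on `[0,1]` and the second derivative
of `f` exists at `x ∈ [0,1]`, then `2n (Bₙ(f;x) - f(x)) → x(1-x) f''(x)`. -/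
theorem voronovskaya (f : ℝ → ℝ) (M : ℝ)
    (hbdd : ∀ t ∈ Set.Icc (0 : ℝ) 1, |f t| ≤ M)
    (x : ℝ) (hx : x ∈ Set.Icc (0 : ℝ) 1) (d : ℝ)
    (hf' : ∀ᶠ y in nhds x, DifferentiableAt ℝ f y)
    (hf'' : HasDerivAt (deriv f) d x) :
    Filter.Tendsto (fun n : ℕ => 2 * (n : ℝ) * (bern n f x - f x))
      Filter.atTop (nhds (x * (1 - x) * d)) := by
  have hlim := tendsto_mul_sum_mul_bernsteinWeight_of_isLittleO hx
    (fun t ht => abs_sub_taylor_two_le hbdd hx ht) (isLittleO_taylor_two hf' hf'')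
  have hconv := (hlim.const_mul 2).const_add (x * (1 - x) * d)
  rw [mul_zero, add_zero] at hconv
  refine hconv.congr' ?_
  filter_upwards [eventually_ne_atTop 0] with n hn
  have hn' : (n : ℝ) ≠ 0 := Nat.cast_ne_zero.mpr hn
  rw [bern_sub_eq_sum_sub_taylor_two hn f x (deriv f x) (d / 2)]
  field_simp
end

section
/- If f \in C^p[0,1] (f has continuous derivatives up to order p on [0,1]), then the p-th derivatives of the Bernstein polynomials B_n(f) converge uniformly to f^{(p)} on [0,1]: \sup_{x\in[0,1]} |B_n^{(p)}(f;x) - f^{(p)}(x)| \to 0 as n \to \infty. -/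
/-!
Write `N = n + p` and `h = 1/N`. Differentiating a Bernstein sum lowers its degree by one and
replaces its coefficients by their scaled forward differences, so `B_N^{(p)} f` is the Bernstein
sum of degree `n` with coefficients `N!/n! · Δ_h^p f (k/N)`. By the mean value theorem for
iterated forward differences, `Δ_h^p f (k/N) = h^p f^{(p)}(ξ_k)` for some `ξ_k ∈ [k/N, (k+p)/N]`,
an interval that also contains `k/n`. As `N!/(n! N^p) → 1` and `f^{(p)}` is uniformly continuous,
the coefficients are uniformly close to `f^{(p)}(k/n)`; since Bernstein sums average their
coefficients, `B_N^{(p)} f` is uniformly close to `B_n f^{(p)}`, which tends to `f^{(p)}` by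
Bernstein's theorem.
-/

open Finset Polynomial Filter Topology
open scoped fwdDiff

section BernsteinSum

variable {R : Type*} [CommRing R]

noncomputable def bernsteinSum (n : ℕ) (c : ℕ → R) : R[X] :=
  ∑ k ∈ range (n + 1), C (c k) * bernsteinPolynomial R n k

theorem eval_bernsteinSum (n : ℕ) (c : ℕ → R) (x : R) :
    (bernsteinSum n c).eval x = ∑ k ∈ range (n + 1), c k * (bernsteinPolynomial R n k).eval x := by
  simp [bernsteinSum, eval_finsetSum]

theorem bernsteinSum_sub (n : ℕ) (c d : ℕ → R) :
    bernsteinSum n c - bernsteinSum n d = bernsteinSum n (c - d) := by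
  simp only [bernsteinSum, ← sum_sub_distrib, ← sub_mul, Pi.sub_apply, map_sub]

theorem derivative_bernsteinSum (n : ℕ) (c : ℕ → R) :
    derivative (bernsteinSum (n + 1) c) = bernsteinSum n fun k => (n + 1) * Δ_[1] c k := by
  set b := bernsteinPolynomial R n
  have hlhs : derivative (bernsteinSum (n + 1) c) = (n + 1) * (∑ k ∈ range (n + 1),
      (C (c (k + 1)) * b k - C (c (k + 1)) * b (k + 1)) - C (c 0) * b 0) := by
    rw [bernsteinSum, derivative_sum, sum_range_succ', derivative_C_mul,
      bernsteinPolynomial.derivative_zero, mul_sub, mul_sum]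
    refine congrArg₂ _ (sum_congr rfl fun k _ => ?_) ?_ <;>
      simp only [derivative_C_mul, bernsteinPolynomial.derivative_succ, b] <;> push_cast <;> ring
  have hrhs : bernsteinSum n (fun k => (n + 1) * Δ_[1] c k) =
      (n + 1) * ∑ k ∈ range (n + 1), (C (c (k + 1)) * b k - C (c k) * b k) := by
    rw [bernsteinSum, mul_sum]
    refine sum_congr rfl fun k _ => ?_
    simp only [fwdDiff, map_mul, map_sub, map_add, map_natCast, map_one, b]
    ring
  have hshift := sum_range_succ' (fun k => C (c k) * b k) (n + 1)
  rw [sum_range_succ, show b (n + 1) = 0 from bernsteinPolynomial.eq_zero_of_lt R n.lt_succ_self,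
    mul_zero, add_zero] at hshift
  rw [hlhs, hrhs, sum_sub_distrib, sum_sub_distrib, hshift]
  ring

theorem iterate_derivative_bernsteinSum (n p : ℕ) (c : ℕ → R) :
    derivative^[p] (bernsteinSum (n + p) c) =
      bernsteinSum n fun k => ((n + p).descFactorial p : R) * Δ_[1] ^[p] c k := by
  induction p generalizing c with
  | zero => simp
  | succ p ih =>
    rw [← add_assoc, Function.iterate_succ_apply, derivative_bernsteinSum, ih]
    congr 1
    ext k
    rw [show (fun k => ((n + p : ℕ) + 1 : R) * Δ_[1] c k) = ((n + p : ℕ) + 1 : R) • Δ_[1] c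
        from rfl, fwdDiff_iter_const_smul, Function.iterate_succ_apply, Nat.succ_descFactorial_succ,
      Pi.smul_apply, smul_eq_mul]
    push_cast
    ring

end BernsteinSum

theorem iteratedDeriv_polynomial_eval (P : ℝ[X]) (p : ℕ) :
    iteratedDeriv p (fun x => P.eval x) = fun x => (derivative^[p] P).eval x := by
  induction p generalizing P with
  | zero => simp
  | succ p ih =>
    rw [iteratedDeriv_succ', show deriv (fun x => P.eval x) = _ from funext fun x => P.deriv, ih,
      Function.iterate_succ_apply]

theorem bern_eq_eval_bernsteinSum (n : ℕ) (f : ℝ → ℝ) :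
    bern n f = fun x => (bernsteinSum n fun k => f (k / n)).eval x := by
  ext x
  rw [bern, eval_bernsteinSum]
  refine sum_congr rfl fun k _ => ?_
  simp only [bernsteinPolynomial, eval_mul, eval_pow, eval_natCast, eval_sub, eval_one, eval_X]
  ring

theorem fwdDiff_iter_comp_div (f : ℝ → ℝ) (a : ℝ) (p k : ℕ) :
    Δ_[1] ^[p] (fun i : ℕ => f (i / a)) k = Δ_[a⁻¹] ^[p] f (k / a) := by
  simp [fwdDiff_iter_eq_sum_shift, div_eq_mul_inv, add_mul]

theorem eval_bernsteinPolynomial_nonneg (n k : ℕ) {x : ℝ} (hx : x ∈ Set.Icc 0 1) :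
    0 ≤ (bernsteinPolynomial ℝ n k).eval x := by
  simp only [bernsteinPolynomial, eval_mul, eval_pow, eval_natCast, eval_sub, eval_one, eval_X]
  exact mul_nonneg (mul_nonneg (Nat.cast_nonneg _) (pow_nonneg hx.1 _))
    (pow_nonneg (sub_nonneg.2 hx.2) _)

theorem abs_eval_bernsteinSum_le {n : ℕ} {c : ℕ → ℝ} {M : ℝ} (hc : ∀ k ≤ n, |c k| ≤ M) {x : ℝ}
    (hx : x ∈ Set.Icc 0 1) : |(bernsteinSum n c).eval x| ≤ M := by
  have hb k := eval_bernsteinPolynomial_nonneg n k hx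
  calc |(bernsteinSum n c).eval x|
      ≤ ∑ k ∈ range (n + 1), |c k| * (bernsteinPolynomial ℝ n k).eval x := by
        rw [eval_bernsteinSum]
        refine (abs_sum_le_sum_abs _ _).trans_eq (sum_congr rfl fun k _ => ?_)
        rw [abs_mul, abs_of_nonneg (hb k)]
    _ ≤ ∑ k ∈ range (n + 1), M * (bernsteinPolynomial ℝ n k).eval x :=
        sum_le_sum fun k hk => mul_le_mul_of_nonneg_right (hc k (mem_range_succ_iff.mp hk)) (hb k)
    _ = M := by rw [← mul_sum, ← eval_finsetSum, bernsteinPolynomial.sum, eval_one, mul_one]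

theorem tendstoUniformlyOn_bern {g : ℝ → ℝ} (hg : ContinuousOn g (Set.Icc 0 1)) :
    TendstoUniformlyOn (fun n => bern n g) g atTop (Set.Icc 0 1) := by
  let G : C(unitInterval, ℝ) := ⟨(Set.Icc 0 1).domRestrict g, hg.domRestrict⟩
  rw [tendstoUniformlyOn_iff_restrict]
  have hG (n : ℕ) : (Set.Icc 0 1).domRestrict (bern n g) = bernsteinApproximation n G := by
    ext x
    rw [bernsteinApproximation.apply]
    change bern n g x = ∑ k : Fin (n + 1), bernstein n k x • g (k / n)
    rw [bern, ← Fin.sum_univ_eq_sum_range]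
    refine sum_congr rfl fun k _ => ?_
    rw [bernstein_apply, smul_eq_mul]
    ring
  simp only [hG]
  exact ContinuousMap.tendsto_iff_tendstoUniformly.mp (bernsteinApproximation_uniform G)

theorem tendstoUniformlyOn_eval_bernsteinSum {g : ℝ → ℝ} (hg : ContinuousOn g (Set.Icc 0 1))
    {c : ℕ → ℕ → ℝ} (hc : ∀ ε > 0, ∀ᶠ n in atTop, ∀ k ≤ n, |c n k - g (k / n)| < ε) :
    TendstoUniformlyOn (fun n x => (bernsteinSum n (c n)).eval x) g atTop (Set.Icc 0 1) := by
  rw [Metric.tendstoUniformlyOn_iff]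
  intro ε hε
  filter_upwards [Metric.tendstoUniformlyOn_iff.mp (tendstoUniformlyOn_bern hg) _ (half_pos hε),
    hc _ (half_pos hε)] with n hbern hcn x hx
  have hdiff : |bern n g x - (bernsteinSum n (c n)).eval x| ≤ ε / 2 := by
    rw [bern_eq_eval_bernsteinSum, ← eval_sub, bernsteinSum_sub]
    refine abs_eval_bernsteinSum_le (fun k hk => ?_) hx
    rw [Pi.sub_apply, abs_sub_comm]
    exact (hcn k hk).le
  have hbern := hbern x hx
  rw [Real.dist_eq] at hbern ⊢
  calc |g x - (bernsteinSum n (c n)).eval x|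
      ≤ |g x - bern n g x| + |bern n g x - (bernsteinSum n (c n)).eval x| := abs_sub_le _ _ _
    _ < ε := by linarith

theorem continuousOn_fwdDiff_iter {M G : Type*} [TopologicalSpace M] [AddCommMonoid M]
    [ContinuousAdd M] [TopologicalSpace G] [AddCommGroup G] [IsTopologicalAddGroup G]
    {g : M → G} {h : M} {n : ℕ} {s t : Set M}
    (hg : ContinuousOn g s) (hts : ∀ k ≤ n, ∀ y ∈ t, y + k • h ∈ s) :
    ContinuousOn (Δ_[h] ^[n] g) t := by
  simp only [_root_.funext (fwdDiff_iter_eq_sum_shift h _ n)]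
  exact continuousOn_finsetSum _ fun k hk =>
    (hg.comp (f := (· + k • h)) (by fun_prop) (hts k (mem_range_succ_iff.mp hk))).const_smul (_ : ℤ)

theorem hasDerivAt_fwdDiff_iter {𝕜 F : Type*} [NontriviallyNormedField 𝕜] [NormedAddCommGroup F]
    [NormedSpace 𝕜 F] {g g' : 𝕜 → F} {h x : 𝕜} {n : ℕ}
    (hg : ∀ k ≤ n, HasDerivAt g (g' (x + k • h)) (x + k • h)) :
    HasDerivAt (Δ_[h] ^[n] g) (Δ_[h] ^[n] g' x) x := by
  simp only [_root_.funext (fwdDiff_iter_eq_sum_shift h _ n)]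
  exact HasDerivAt.fun_sum fun k hk =>
    ((hg k (mem_range_succ_iff.mp hk)).comp_add_const x (k • h)).const_smul (_ : ℤ)

theorem exists_fwdDiff_iter_eq_pow_mul_iteratedDerivWithin {u v h : ℝ} (hh : 0 < h) (n : ℕ)
    {g : ℝ → ℝ} (hg : ContDiffOn ℝ n g (Set.Icc u v)) {t : ℝ} (hut : u ≤ t) (htv : t + n * h ≤ v) :
    ∃ ξ ∈ Set.Icc t (t + n * h),
      Δ_[h] ^[n] g t = h ^ n * iteratedDerivWithin n g (Set.Icc u v) ξ := by
  induction n generalizing g t with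
  | zero => exact ⟨t, by simp, by simp⟩
  | succ n ih =>
    push_cast at htv
    have hnh : 0 ≤ (n : ℝ) * h := by positivity
    have huv : u < v := by linarith
    set g' := derivWithin g (Set.Icc u v)
    have hg' : ContDiffOn ℝ n g' (Set.Icc u v) := hg.derivWithin (uniqueDiffOn_Icc huv) le_rfl
    have hderiv : ∀ y ∈ Set.Ioo u v, HasDerivAt g (g' y) y := fun y hy =>
      (hg.differentiableOn (by simp) y (Set.Ioo_subset_Icc_self hy)).hasDerivWithinAt.hasDerivAt
        (Icc_mem_nhds hy.1 hy.2)
    have hkh {k : ℕ} (hk : k ≤ n) : 0 ≤ k • h ∧ k • h ≤ n * h :=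
      ⟨nsmul_nonneg hh.le k, by rw [nsmul_eq_mul]; gcongr⟩
    obtain ⟨τ, hτ, hslope⟩ := exists_hasDerivAt_eq_slope (Δ_[h] ^[n] g) (Δ_[h] ^[n] g')
      (lt_add_of_pos_right t hh)
      (continuousOn_fwdDiff_iter hg.continuousOn fun k hk y hy =>
        ⟨by linarith [hy.1, hkh hk], by linarith [hy.2, hkh hk]⟩)
      fun y hy => hasDerivAt_fwdDiff_iter fun k hk =>
        hderiv _ ⟨by linarith [hy.1, hkh hk], by linarith [hy.2, hkh hk]⟩
    obtain ⟨ξ, hξ, hΔ⟩ := ih hg' (t := τ) (by linarith [hτ.1]) (by linarith [hτ.2])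
    refine ⟨ξ, ⟨by linarith [hτ.1, hξ.1], by push_cast; linarith [hτ.2, hξ.2]⟩, ?_⟩
    rw [iteratedDerivWithin_succ', Function.iterate_succ_apply', pow_succ', mul_assoc, ← hΔ,
      hslope, add_sub_cancel_left, mul_div_cancel₀ _ hh.ne']
    rfl

theorem tendsto_descFactorial_div_pow (p : ℕ) :
    Tendsto (fun N : ℕ => (N.descFactorial p : ℝ) / N ^ p) atTop (𝓝 1) := by
  have hprod : Tendsto (fun N : ℕ => ∏ i ∈ range p, (1 - (i : ℝ) / N)) atTop (𝓝 1) := by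
    simpa using tendsto_finsetProd (range p) fun i _ =>
      (tendsto_const_div_atTop_nhds_zero_nat (i : ℝ)).const_sub 1
  refine hprod.congr' ?_
  filter_upwards [eventually_gt_atTop p] with N hN
  rw [Nat.descFactorial_eq_prod_range, Nat.cast_prod,
    show (N : ℝ) ^ p = ∏ _i ∈ range p, (N : ℝ) by simp, ← prod_div_distrib]
  refine prod_congr rfl fun i hi => ?_
  have hN0 : (N : ℝ) ≠ 0 := by exact_mod_cast (show N ≠ 0 by omega)
  rw [Nat.cast_sub (by have := mem_range.mp hi; omega)]
  field_simp

theorem exists_pos_eventually_abs_mul_sub_lt {α : Type*} [PseudoMetricSpace α] {K : Set α}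
    (hK : IsCompact K) {g : α → ℝ} (hg : ContinuousOn g K) {a : ℕ → ℝ} (ha : Tendsto a atTop (𝓝 1))
    {ε : ℝ} (hε : 0 < ε) :
    ∃ δ > 0, ∀ᶠ n in atTop, ∀ x ∈ K, ∀ y ∈ K, dist x y < δ → |a n * g x - g y| < ε := by
  obtain ⟨M, hM⟩ := hK.exists_bound_of_continuousOn hg
  obtain ⟨δ, hδ, hclose⟩ :=
    Metric.uniformContinuousOn_iff.mp (hK.uniformContinuousOn_of_continuous hg) _ (half_pos hε)
  have hM' : 0 < |M| + 1 := by positivity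
  have hsmall : ∀ᶠ n in atTop, |a n - 1| < ε / 2 / (|M| + 1) :=
    (Metric.tendsto_nhds.mp ha) _ (by positivity)
  refine ⟨δ, hδ, hsmall.mono fun n hn x hx y hy hxy => ?_⟩
  have hgx : |g x| ≤ |M| + 1 := by linarith [hM x hx, le_abs_self M, Real.norm_eq_abs (g x)]
  have hgxy : |g x - g y| < ε / 2 := hclose x hx y hy hxy
  calc |a n * g x - g y| = |(a n - 1) * g x + (g x - g y)| := by ring_nf
    _ ≤ |a n - 1| * |g x| + |g x - g y| := (abs_add_le _ _).trans_eq (by rw [abs_mul])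
    _ ≤ ε / 2 / (|M| + 1) * (|M| + 1) + |g x - g y| := by gcongr
    _ < ε := by rw [div_mul_cancel₀ _ hM'.ne']; linarith

theorem eventually_abs_descFactorial_mul_fwdDiff_iter_sub_lt {p : ℕ} {f : ℝ → ℝ}
    (hf : ContDiffOn ℝ p f (Set.Icc 0 1)) {ε : ℝ} (hε : 0 < ε) :
    ∀ᶠ n in atTop, ∀ k ≤ n, |((n + p).descFactorial p : ℝ) *
      Δ_[((n + p : ℕ) : ℝ)⁻¹] ^[p] f (k / (n + p : ℕ)) -
        iteratedDerivWithin p f (Set.Icc 0 1) (k / n)| < ε := by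
  have hg := hf.continuousOn_iteratedDerivWithin le_rfl (uniqueDiffOn_Icc one_pos)
  obtain ⟨δ, hδ, hclose⟩ := exists_pos_eventually_abs_mul_sub_lt isCompact_Icc hg
    ((tendsto_descFactorial_div_pow p).comp (tendsto_add_atTop_nat p)) hε
  have hmesh : ∀ᶠ n : ℕ in atTop, (p : ℝ) / (n + p : ℕ) < δ :=
    ((tendsto_const_div_atTop_nhds_zero_nat (p : ℝ)).comp (tendsto_add_atTop_nat p)).eventually
      (gt_mem_nhds hδ)
  filter_upwards [hclose, hmesh, eventually_gt_atTop 0] with n hclose hmesh hn k hk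
  set N : ℝ := ((n + p : ℕ) : ℝ) with hNdef
  have hn' : (0 : ℝ) < n := by exact_mod_cast hn
  have hN : 0 < N := by positivity
  have hkn : (k : ℝ) ≤ n := by exact_mod_cast hk
  have hgrid : (k : ℝ) / N + p * N⁻¹ = (k + p) / N := by ring
  have hend : (k : ℝ) / N + p * N⁻¹ ≤ 1 := by
    rw [hgrid, div_le_one hN, hNdef]; push_cast; linarith
  obtain ⟨ξ, hξ, hΔ⟩ :=
    exists_fwdDiff_iter_eq_pow_mul_iteratedDerivWithin (inv_pos.2 hN) p hf (by positivity) hend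
  have hlo : (k : ℝ) / N ≤ k / n :=
    div_le_div_of_nonneg_left k.cast_nonneg hn' (by rw [hNdef]; push_cast; linarith)
  have hhi : (k : ℝ) / n ≤ k / N + p * N⁻¹ := by
    rw [hgrid, div_le_div_iff₀ hn' hN, hNdef]; push_cast; nlinarith
  rw [hΔ, ← mul_assoc, inv_pow, ← div_eq_mul_inv]
  refine hclose ξ ⟨(by positivity : (0 : ℝ) ≤ k / N).trans hξ.1, hξ.2.trans hend⟩ (k / n)
    ⟨by positivity, (div_le_one hn').2 hkn⟩ ?_
  rw [Real.dist_eq, abs_sub_lt_iff]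
  rw [div_eq_mul_inv] at hmesh
  constructor <;> linarith [hξ.1, hξ.2]

/-- If `f ∈ Cᵖ[0,1]`, then the `p`-th derivatives of the Bernstein polynomials
converge uniformly on `[0,1]` to the `p`-th derivative of `f`. -/
theorem bernstein_deriv_uniform_convergence (p : ℕ) (f : ℝ → ℝ)
    (hf : ContDiffOn ℝ p f (Set.Icc 0 1)) :
    TendstoUniformlyOn (fun n x => iteratedDeriv p (bern n f) x)
      (fun x => iteratedDerivWithin p f (Set.Icc 0 1) x)
      Filter.atTop (Set.Icc 0 1) := by
  have hrepr (n : ℕ) : iteratedDeriv p (bern (n + p) f) = fun x => (bernsteinSum n fun k =>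
      ((n + p).descFactorial p : ℝ) * Δ_[((n + p : ℕ) : ℝ)⁻¹] ^[p] f (k / (n + p : ℕ))).eval x := by
    simp only [bern_eq_eval_bernsteinSum, iteratedDeriv_polynomial_eval,
      iterate_derivative_bernsteinSum, fwdDiff_iter_comp_div]
  rw [← map_add_atTop_eq_nat p]
  change TendstoUniformlyOn (fun n x => iteratedDeriv p (bern (n + p) f) x) _ atTop _
  simp only [hrepr]
  exact tendstoUniformlyOn_eval_bernsteinSum
    (hf.continuousOn_iteratedDerivWithin le_rfl (uniqueDiffOn_Icc one_pos))
    fun ε hε => eventually_abs_descFactorial_mul_fwdDiff_iter_sub_lt hf hε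
end

section
/- Let \alpha, T, \epsilon_1, \epsilon_2 > 0 and let \delta : [0,T] \to \mathbb{R} be continuous with |\delta(t)| \leq \epsilon_1 + \frac{\epsilon_2}{\Gamma(\alpha)} \int_0^t (t-x)^{\alpha-1} |\delta(x)|\, dx for all t \in [0,T]. Then |\delta(t)| \leq \epsilon_1 E_{\alpha,1}(\epsilon_2 t^\alpha) for all t \in [0,T], where E_{\alpha,1}(z) = \sum_{k=0}^\infty \frac{z^k}{\Gamma(\alpha k + 1)} is the Mittag-Leffler function. -/
/-!
Write `I` for the operator `u ↦ ε₂ / Γ(α) ∫₀ᵗ (t - x)^(α-1) u(x) dx`, which is monotone because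
its kernel is nonnegative. Starting from a bound `M` for `|δ|`, the Picard iterates of
`u ↦ ε₁ + I u` stay above `|δ|`. The Beta integral gives
`I (x ↦ (ε₂ x^α)^k / Γ(αk+1)) = (ε₂ t^α)^(k+1) / Γ(α(k+1)+1)`, so the `n`-th iterate is `ε₁`
times the `n`-th partial sum of the Mittag-Leffler series at `ε₂ t^α` plus `M` times its `n`-th
term. The series converges, so the iterates tend to `ε₁ E_{α,1}(ε₂ t^α)`.
-/

/-- The one-parameter Mittag-Leffler function `E_{α,1}(z) = ∑ zᵏ / Γ(αk+1)`. -/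
noncomputable def mittagLeffler (α z : ℝ) : ℝ :=
  ∑' k : ℕ, z ^ k / Real.Gamma (α * k + 1)

open Real Filter Finset intervalIntegral Topology

theorem integral_rpow_mul_sub_rpow {a b t : ℝ} (ha : 0 < a) (hb : 0 < b) (ht : 0 < t) :
    ∫ x in (0 : ℝ)..t, x ^ (a - 1) * (t - x) ^ (b - 1) =
      Gamma a * Gamma b / Gamma (a + b) * t ^ (a + b - 1) := by
  have hbeta := Complex.betaIntegral_scaled a b ht
  have hGamma := Complex.Gamma_mul_Gamma_eq_betaIntegral (s := a) (t := b)
    (by simpa using ha) (by simpa using hb)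
  have hcast : ∫ x in (0 : ℝ)..t, (x : ℂ) ^ ((a : ℂ) - 1) * ((t : ℂ) - x) ^ ((b : ℂ) - 1) =
      ((∫ x in (0 : ℝ)..t, x ^ (a - 1) * (t - x) ^ (b - 1) : ℝ) : ℂ) := by
    rw [← integral_ofReal]
    refine integral_congr fun x hx => ?_
    rw [Set.uIcc_of_le ht.le] at hx
    rw [Complex.ofReal_mul, Complex.ofReal_cpow hx.1, Complex.ofReal_cpow (sub_nonneg.2 hx.2)]
    push_cast
    ring
  have hGab : Complex.Gamma (a + b) ≠ 0 := by
    rw [← Complex.ofReal_add, Complex.Gamma_ofReal]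
    exact_mod_cast (Gamma_pos_of_pos (add_pos ha hb)).ne'
  rw [hcast, ← Complex.ofReal_one, ← Complex.ofReal_add, ← Complex.ofReal_sub,
    ← Complex.ofReal_cpow ht.le] at hbeta
  apply Complex.ofReal_injective
  rw [hbeta]
  push_cast [← Complex.Gamma_ofReal]
  rw [hGamma, mul_div_cancel_left₀ _ hGab, mul_comm]

theorem integral_sub_rpow_mul_rpow {α β t : ℝ} (hα : 0 < α) (hβ : -1 < β) (ht : 0 < t) :
    ∫ x in (0 : ℝ)..t, (t - x) ^ (α - 1) * x ^ β =
      Gamma α * Gamma (β + 1) / Gamma (α + β + 1) * t ^ (α + β) := by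
  have h := integral_rpow_mul_sub_rpow (neg_lt_iff_pos_add.1 hβ) hα ht
  simp only [add_sub_cancel_right, mul_comm (_ ^ β)] at h
  rw [h]
  ring_nf

theorem Real.mul_Gamma_le_Gamma_add {s c : ℝ} (hs : 1 ≤ s) (hc : 1 ≤ c) :
    s * Gamma s ≤ Gamma (s + c) := by
  rw [← Gamma_add_one (by positivity)]
  exact Gamma_strictMonoOn_Ici.monotoneOn (Set.mem_Ici.2 (by linarith))
    (Set.mem_Ici.2 (by linarith)) (by linarith)

theorem summable_of_eventually_le_mul_add {f : ℕ → ℝ} (hf : 0 ≤ f) {m : ℕ} [NeZero m] {r : ℝ}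
    (hr : r < 1) (h : ∀ᶠ k in atTop, f (k + m) ≤ r * f k) : Summable f := by
  -- the sums over the blocks `[j m, (j + 1) m)` satisfy the ratio test
  rw [← (Nat.divModEquiv m).symm.summable_iff, summable_prod_of_nonneg (f := f ∘ _) fun _ => hf _]
  refine ⟨fun _ => .of_finite, summable_of_ratio_norm_eventually_le hr ?_⟩
  obtain ⟨N, hN⟩ := eventually_atTop.1 h
  filter_upwards [eventually_ge_atTop N] with j hj
  have hblock : ∀ j, 0 ≤ ∑ i : Fin m, f ((Nat.divModEquiv m).symm (j, i)) :=
    fun _ => sum_nonneg fun _ _ => hf _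
  simp only [tsum_fintype, Function.comp_apply, Real.norm_of_nonneg (hblock _), mul_sum]
  refine sum_le_sum fun i _ => ?_
  simpa [add_mul, add_right_comm] using hN (j * m + i) (by nlinarith [NeZero.one_le (n := m)])

noncomputable def mittagLefflerTerm (α z : ℝ) (k : ℕ) : ℝ :=
  z ^ k / Gamma (α * k + 1)

theorem mittagLeffler_eq_tsum (α z : ℝ) : mittagLeffler α z = ∑' k, mittagLefflerTerm α z k := rfl

theorem mittagLefflerTerm_zero (α z : ℝ) : mittagLefflerTerm α z 0 = 1 := by
  simp [mittagLefflerTerm]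

theorem summable_mittagLefflerTerm {α : ℝ} (hα : 0 < α) (z : ℝ) :
    Summable (mittagLefflerTerm α z) := by
  suffices h : ∀ x : ℝ, 0 ≤ x → Summable (mittagLefflerTerm α x) by
    refine .of_norm ((h |z| (abs_nonneg z)).congr fun k => ?_)
    simp [mittagLefflerTerm, abs_of_pos (Gamma_pos_of_pos (by positivity : 0 < α * k + 1))]
  intro x hx
  set m := ⌈α⁻¹⌉₊ + 1
  have hm : 1 ≤ α * m := by
    calc 1 = α * α⁻¹ := (mul_inv_cancel₀ hα.ne').symm
      _ ≤ α * m := by gcongr; exact (Nat.le_ceil _).trans (by simp [m])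
  have hlarge : ∀ᶠ k : ℕ in atTop, 2 * x ^ m ≤ α * k + 1 :=
    ((tendsto_natCast_atTop_atTop.const_mul_atTop hα).atTop_add
      tendsto_const_nhds).eventually_ge_atTop _
  refine summable_of_eventually_le_mul_add (m := m)
    (fun k => div_nonneg (pow_nonneg hx k) (Gamma_nonneg_of_nonneg (by positivity)))
    (by norm_num : (1 / 2 : ℝ) < 1) ?_
  filter_upwards [hlarge] with k hk
  have hΓ : (α * k + 1) * Gamma (α * k + 1) ≤ Gamma (α * ↑(k + m) + 1) := by
    have := mul_Gamma_le_Gamma_add (s := α * k + 1) (le_add_of_nonneg_left (by positivity)) hm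
    convert this using 2; push_cast; ring
  have hG : 0 < Gamma (α * k + 1) := Gamma_pos_of_pos (by positivity)
  calc x ^ (k + m) / Gamma (α * ↑(k + m) + 1)
      ≤ x ^ k * x ^ m / ((α * k + 1) * Gamma (α * k + 1)) := by rw [pow_add]; gcongr
    _ ≤ x ^ k * ((α * k + 1) / 2) / ((α * k + 1) * Gamma (α * k + 1)) := by gcongr; linarith
    _ = 1 / 2 * (x ^ k / Gamma (α * k + 1)) := by field_simp

theorem mittagLefflerTerm_mul_rpow {α x : ℝ} (ε : ℝ) (hx : 0 ≤ x) (k : ℕ) :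
    mittagLefflerTerm α (ε * x ^ α) k = ε ^ k / Gamma (α * k + 1) * x ^ (α * k) := by
  rw [mittagLefflerTerm, mul_pow, ← rpow_natCast (x ^ α), ← rpow_mul hx]
  ring

theorem continuous_mittagLefflerTerm_mul_rpow {α : ℝ} (hα : 0 < α) (ε : ℝ) (k : ℕ) :
    Continuous fun x => mittagLefflerTerm α (ε * x ^ α) k :=
  ((continuous_const.mul (continuous_rpow_const hα.le)).pow k).div_const _

theorem intervalIntegrable_sub_rpow_mul {α t : ℝ} (hα : 0 < α) {f : ℝ → ℝ}
    (hf : ContinuousOn f (Set.uIcc 0 t)) :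
    IntervalIntegrable (fun x => (t - x) ^ (α - 1) * f x) MeasureTheory.volume 0 t := by
  have h := (intervalIntegrable_rpow' (by linarith : -1 < α - 1) (a := 0) (b := t)).comp_sub_left t
  simp only [sub_self, sub_zero] at h
  exact h.symm.mul_continuousOn hf

theorem integral_sub_rpow_mul_mono {α t : ℝ} (hα : 0 < α) (ht : 0 ≤ t) {f g : ℝ → ℝ}
    (hf : ContinuousOn f (Set.Icc 0 t)) (hg : ContinuousOn g (Set.Icc 0 t))
    (hfg : ∀ x ∈ Set.Icc 0 t, f x ≤ g x) :
    ∫ x in (0 : ℝ)..t, (t - x) ^ (α - 1) * f x ≤ ∫ x in (0 : ℝ)..t, (t - x) ^ (α - 1) * g x := by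
  rw [← Set.uIcc_of_le ht] at hf hg
  refine integral_mono_on ht (intervalIntegrable_sub_rpow_mul hα hf)
    (intervalIntegrable_sub_rpow_mul hα hg) fun x hx => ?_
  exact mul_le_mul_of_nonneg_left (hfg x hx) (rpow_nonneg (sub_nonneg.2 hx.2) _)

theorem integral_sub_rpow_mul_mittagLefflerTerm {α t : ℝ} (hα : 0 < α) (ε : ℝ) (ht : 0 ≤ t)
    (k : ℕ) :
    ε / Gamma α * ∫ x in (0 : ℝ)..t, (t - x) ^ (α - 1) * mittagLefflerTerm α (ε * x ^ α) k =
      mittagLefflerTerm α (ε * t ^ α) (k + 1) := by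
  rcases ht.eq_or_lt with rfl | ht
  · simp [mittagLefflerTerm, zero_rpow hα.ne']
  have hpow : ∫ x in (0 : ℝ)..t, (t - x) ^ (α - 1) * mittagLefflerTerm α (ε * x ^ α) k =
      ε ^ k / Gamma (α * k + 1) * ∫ x in (0 : ℝ)..t, (t - x) ^ (α - 1) * x ^ (α * k) := by
    rw [← integral_const_mul]
    refine integral_congr fun x hx => ?_
    rw [Set.uIcc_of_le ht.le] at hx
    simp only [mittagLefflerTerm_mul_rpow ε hx.1]
    ring
  have hΓα : Gamma α ≠ 0 := (Gamma_pos_of_pos hα).ne'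
  have hΓk : Gamma (α * k + 1) ≠ 0 := (Gamma_pos_of_pos (by positivity)).ne'
  rw [hpow, integral_sub_rpow_mul_rpow hα (by linarith [mul_nonneg hα.le k.cast_nonneg]) ht,
    mittagLefflerTerm_mul_rpow ε ht.le, Nat.cast_succ, mul_add_one α, add_comm α, pow_succ]
  field_simp

noncomputable def picardIterate (α ε₁ ε₂ M : ℝ) : ℕ → ℝ → ℝ
  | 0 => fun _ => M
  | n + 1 => fun t =>
    ε₁ + ε₂ / Gamma α * ∫ x in (0 : ℝ)..t, (t - x) ^ (α - 1) * picardIterate α ε₁ ε₂ M n x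

theorem picardIterate_eq {α : ℝ} (hα : 0 < α) (ε₁ ε₂ M : ℝ) (n : ℕ) {t : ℝ} (ht : 0 ≤ t) :
    picardIterate α ε₁ ε₂ M n t =
      ε₁ * ∑ k ∈ range n, mittagLefflerTerm α (ε₂ * t ^ α) k +
        M * mittagLefflerTerm α (ε₂ * t ^ α) n := by
  induction n generalizing t with
  | zero => simp [picardIterate, mittagLefflerTerm_zero]
  | succ n ih =>
    set φ := fun k x => mittagLefflerTerm α (ε₂ * x ^ α) k
    have hφ : ∀ k,
        IntervalIntegrable (fun x => (t - x) ^ (α - 1) * φ k x) MeasureTheory.volume 0 t :=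
      fun k => intervalIntegrable_sub_rpow_mul hα
        (continuous_mittagLefflerTerm_mul_rpow hα ε₂ k).continuousOn
    have hlin : ∫ x in (0 : ℝ)..t, (t - x) ^ (α - 1) * picardIterate α ε₁ ε₂ M n x =
        ε₁ * ∑ k ∈ range n, (∫ x in (0 : ℝ)..t, (t - x) ^ (α - 1) * φ k x) +
          M * ∫ x in (0 : ℝ)..t, (t - x) ^ (α - 1) * φ n x := by
      have hS : IntervalIntegrable (fun x => ∑ k ∈ range n, (t - x) ^ (α - 1) * φ k x)
          MeasureTheory.volume 0 t := by
        simpa only [Finset.sum_fn] using IntervalIntegrable.sum (range n) fun k _ => hφ k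
      rw [← integral_finsetSum fun k _ => hφ k, ← integral_const_mul, ← integral_const_mul,
        ← integral_add (hS.const_mul _) ((hφ n).const_mul _)]
      refine integral_congr fun x hx => ?_
      rw [Set.uIcc_of_le ht] at hx
      rw [ih hx.1, ← mul_sum]
      ring
    simp only [picardIterate, hlin, mul_add, mul_sum, mul_left_comm (ε₂ / Gamma α),
      integral_sub_rpow_mul_mittagLefflerTerm hα ε₂ ht, φ]
    rw [sum_range_succ' _ n, mittagLefflerTerm_zero]
    ring

theorem continuousOn_picardIterate {α : ℝ} (hα : 0 < α) (ε₁ ε₂ M : ℝ) (n : ℕ) :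
    ContinuousOn (picardIterate α ε₁ ε₂ M n) (Set.Ici 0) := by
  refine ContinuousOn.congr ?_ fun t ht => picardIterate_eq hα ε₁ ε₂ M n ht
  have := continuous_mittagLefflerTerm_mul_rpow hα ε₂
  fun_prop

theorem le_picardIterate {α T ε₁ ε₂ M : ℝ} (hα : 0 < α) (hε₂ : 0 ≤ ε₂) {u : ℝ → ℝ}
    (hu : ContinuousOn u (Set.Icc 0 T)) (hM : ∀ t ∈ Set.Icc 0 T, u t ≤ M)
    (hineq : ∀ t ∈ Set.Icc 0 T,
      u t ≤ ε₁ + ε₂ / Gamma α * ∫ x in (0 : ℝ)..t, (t - x) ^ (α - 1) * u x)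
    (n : ℕ) : ∀ t ∈ Set.Icc 0 T, u t ≤ picardIterate α ε₁ ε₂ M n t := by
  induction n with
  | zero => exact hM
  | succ n ih =>
    intro t ht
    have hsub : Set.Icc 0 t ⊆ Set.Icc 0 T := Set.Icc_subset_Icc_right ht.2
    have hmono := integral_sub_rpow_mul_mono hα ht.1 (hu.mono hsub)
      ((continuousOn_picardIterate hα ε₁ ε₂ M n).mono Set.Icc_subset_Ici_self)
      fun x hx => ih x (hsub hx)
    calc u t ≤ ε₁ + ε₂ / Gamma α * ∫ x in (0 : ℝ)..t, (t - x) ^ (α - 1) * u x := hineq t ht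
      _ ≤ picardIterate α ε₁ ε₂ M (n + 1) t := by
        have hc : 0 ≤ ε₂ / Gamma α := div_nonneg hε₂ (Gamma_pos_of_pos hα).le
        unfold picardIterate; gcongr

theorem tendsto_picardIterate {α : ℝ} (hα : 0 < α) (ε₁ ε₂ M : ℝ) {t : ℝ} (ht : 0 ≤ t) :
    Tendsto (fun n => picardIterate α ε₁ ε₂ M n t) atTop
      (𝓝 (ε₁ * mittagLeffler α (ε₂ * t ^ α))) := by
  have hsum := summable_mittagLefflerTerm hα (ε₂ * t ^ α)
  simp only [picardIterate_eq hα ε₁ ε₂ M _ ht, mittagLeffler_eq_tsum]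
  simpa using (hsum.hasSum.tendsto_sum_nat.const_mul ε₁).add (hsum.tendsto_atTop_zero.const_mul M)

theorem fractional_gronwall_general (α T ε₁ ε₂ : ℝ) (hα : 0 < α)
    (hε₂ : 0 < ε₂) (δ : ℝ → ℝ)
    (hδ : ContinuousOn δ (Set.Icc 0 T))
    (hineq : ∀ t ∈ Set.Icc (0 : ℝ) T,
      |δ t| ≤ ε₁ + (ε₂ / Real.Gamma α) * ∫ x in (0 : ℝ)..t, (t - x) ^ (α - 1) * |δ x|) :
    ∀ t ∈ Set.Icc (0 : ℝ) T, |δ t| ≤ ε₁ * mittagLeffler α (ε₂ * t ^ α) := by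
  obtain ⟨M, hM⟩ := isCompact_Icc.exists_bound_of_continuousOn hδ
  intro t ht
  exact ge_of_tendsto' (tendsto_picardIterate hα ε₁ ε₂ M ht.1)
    fun n => le_picardIterate hα hε₂.le hδ.abs hM hineq n t ht

/-- Fractional Gronwall inequality. -/
theorem fractional_gronwall (α T ε₁ ε₂ : ℝ) (hα : 0 < α) (hT : 0 < T)
    (hε₁ : 0 < ε₁) (hε₂ : 0 < ε₂) (δ : ℝ → ℝ)
    (hδ : ContinuousOn δ (Set.Icc 0 T))
    (hineq : ∀ t ∈ Set.Icc (0 : ℝ) T,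
      |δ t| ≤ ε₁ + (ε₂ / Real.Gamma α) * ∫ x in (0 : ℝ)..t, (t - x) ^ (α - 1) * |δ x|) :
    ∀ t ∈ Set.Icc (0 : ℝ) T, |δ t| ≤ ε₁ * mittagLeffler α (ε₂ * t ^ α) :=
  fractional_gronwall_general α T ε₁ ε₂ hα hε₂ δ hδ hineq
end
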